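/- (Tits system axiom T2 for E(n,D_τ).) For every α̇ in the affine simple system Π_a, w_{α̇}(1)·B^±·w_{α̇}(1) is not contained in B^±; that is, there exists b ∈ B^± with w_{α̇}(1)·b·w_{α̇}(1) ∉ B^±. -/

import Mathlib

namespace NCLaurent


/-- `A` is the ring `D_τ = D[t,t⁻¹]` of skew Laurent polynomials over the division
ring `D` twisted by `τ`: it contains `D` via `ι`, has a unit `t` with `t a t⁻¹ = τ a`,
and the powers of `t` form a basis of `A` as a left `D`-module. -/
structure IsSkewLaurent {D A : Type} [DivisionRing D] [Ring A]
    (τ : D ≃+* D) (ι : D →+* A) (t : Aˣ) : Prop where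
  injective : Function.Injective ι
  conj_eq : ∀ a : D, (t : A) * ι a * ((t⁻¹ : Aˣ) : A) = ι (τ a)
  repr_unique : ∀ x : A, ∃! c : ℤ →₀ D, x = c.sum fun k a => ι a * ((t ^ k : Aˣ) : A)

variable {D A : Type} [DivisionRing D] [Ring A]

/-- The elementary matrix `e_{ij}(f) = I + f·E_{ij}` as an element of `GL(n, A)`. -/
def elemUnit {n : ℕ} (i j : Fin n) (hij : i ≠ j) (f : A) : (Matrix (Fin n) (Fin n) A)ˣ where
  val := 1 + Matrix.single i j f
  inv := 1 - Matrix.single i j f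
  val_inv := by
    have h : Matrix.single i j f * Matrix.single i j f = 0 :=
      Matrix.single_mul_single_of_ne (h := hij.symm) ..
    rw [mul_sub, mul_one, add_mul, one_mul, h]
    abel
  inv_val := by
    have h : Matrix.single i j f * Matrix.single i j f = 0 :=
      Matrix.single_mul_single_of_ne (h := hij.symm) ..
    rw [mul_add, mul_one, sub_mul, one_mul, h]
    abel

variable (ι : D →+* A) (t : Aˣ)

/-- `x_{β̇}(f)` for the affine root `β̇ = (ε_i − ε_j, m)` and `f ∈ D`. -/
def xRoot {n : ℕ} (i j : Fin n) (hij : i ≠ j) (m : ℤ) (f : D) : (Matrix (Fin n) (Fin n) A)ˣ :=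
  if i < j then elemUnit i j hij (ι f * ((t ^ m : Aˣ) : A))
  else elemUnit i j hij (((t ^ m : Aˣ) : A) * ι f)

/-- `w_{β̇}(u) = x_{β̇}(u)·x_{−β̇}(−u⁻¹)·x_{β̇}(u)` for `u ∈ D^×`. -/
def wRoot {n : ℕ} (i j : Fin n) (hij : i ≠ j) (m : ℤ) (u : Dˣ) : (Matrix (Fin n) (Fin n) A)ˣ :=
  xRoot ι t i j hij m (u : D) * xRoot ι t j i hij.symm (-m) (-((u⁻¹ : Dˣ) : D)) *
    xRoot ι t i j hij m (u : D)

/-- `h_{β̇}(u) = w_{β̇}(u)·w_{(β,0)}(−1)`. -/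
def hRoot {n : ℕ} (i j : Fin n) (hij : i ≠ j) (m : ℤ) (u : Dˣ) : (Matrix (Fin n) (Fin n) A)ˣ :=
  wRoot ι t i j hij m u * wRoot ι t i j hij 0 (-1)

/-- Membership of `(ε_i − ε_j, m)` in `Δ_a⁺ = (Δ⁺ × ℤ_{≥0}) ∪ (Δ⁻ × ℤ_{>0})`. -/
def AffPos {n : ℕ} (i j : Fin n) (m : ℤ) : Prop := (i < j ∧ 0 ≤ m) ∨ (j < i ∧ 0 < m)

/-- Membership of `(ε_i − ε_j, m)` in `Δ_a⁻ = (Δ⁺ × ℤ_{<0}) ∪ (Δ⁻ × ℤ_{≤0})`. -/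
def AffNeg {n : ℕ} (i j : Fin n) (m : ℤ) : Prop := (i < j ∧ m < 0) ∨ (j < i ∧ m ≤ 0)

/-- `(ε_i − ε_j, m)` belongs to the affine simple system
`Π_a = {(α_i, 0)} ∪ {(−θ, 1)}`. -/
def SimpleAff (n : ℕ) (i j : Fin n) (m : ℤ) : Prop :=
  ((j : ℕ) = (i : ℕ) + 1 ∧ m = 0) ∨ ((i : ℕ) = n - 1 ∧ (j : ℕ) = 0 ∧ m = 1)

/-- `U⁺` (for `pos = true`) resp. `U⁻` (for `pos = false`). -/
def Ugrp (n : ℕ) (pos : Bool) : Subgroup (Matrix (Fin n) (Fin n) A)ˣ :=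
  Subgroup.closure {g | ∃ (i j : Fin n) (hij : i ≠ j) (m : ℤ) (f : D),
    (if pos then AffPos i j m else AffNeg i j m) ∧ g = xRoot ι t i j hij m f}

/-- The subgroup `N` generated by all `w_{β̇}(u)`. -/
def Ngrp (n : ℕ) : Subgroup (Matrix (Fin n) (Fin n) A)ˣ :=
  Subgroup.closure {g | ∃ (i j : Fin n) (hij : i ≠ j) (m : ℤ) (u : Dˣ),
    g = wRoot ι t i j hij m u}

/-- The subgroup `T` generated by all `h_{β̇}(u)`. -/
def Tgrp (n : ℕ) : Subgroup (Matrix (Fin n) (Fin n) A)ˣ :=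
  Subgroup.closure {g | ∃ (i j : Fin n) (hij : i ≠ j) (m : ℤ) (u : Dˣ),
    g = hRoot ι t i j hij m u}

/-- `T₀`: the subgroup generated by the elements of `T` all of whose diagonal
entries have `t`-degree `0`, i.e. lie in `ι(D^×)`. -/
def T0grp (n : ℕ) : Subgroup (Matrix (Fin n) (Fin n) A)ˣ :=
  Subgroup.closure {h | h ∈ Tgrp ι t n ∧
    ∀ i : Fin n, ∃ s : D, s ≠ 0 ∧ (h : (Matrix (Fin n) (Fin n) A)ˣ).val i i = ι s}

/-- `B⁺ = ⟨U⁺, T₀⟩` resp. `B⁻ = ⟨U⁻, T₀⟩`. -/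
def Bgrp (n : ℕ) (pos : Bool) : Subgroup (Matrix (Fin n) (Fin n) A)ˣ :=
  Ugrp ι t n pos ⊔ T0grp ι t n

/-- The elementary group `E(n, D_τ)`, generated by all `x_{β̇}(f)`, `β̇ ∈ Δ_a`, `f ∈ D`. -/
def Egrp (n : ℕ) : Subgroup (Matrix (Fin n) (Fin n) A)ˣ :=
  Subgroup.closure {g | ∃ (i j : Fin n) (hij : i ≠ j) (m : ℤ) (f : D),
    g = xRoot ι t i j hij m f}

/-- The elementary group `E(n, D_τ)`, generated by the `I + f·E_{ij}`, `f ∈ D_τ`. -/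
def EgrpL (n : ℕ) : Subgroup (Matrix (Fin n) (Fin n) A)ˣ :=
  Subgroup.closure {g | ∃ (i j : Fin n) (hij : i ≠ j) (f : A), g = elemUnit i j hij f}

/-- The subgroup `U'_{β̇}` (for either sign, according to `pos`). -/
def Uprime {n : ℕ} (i j : Fin n) (hij : i ≠ j) (m : ℤ) (pos : Bool) :
    Subgroup (Matrix (Fin n) (Fin n) A)ˣ :=
  Subgroup.closure {h | ∃ (g f : D) (k l : Fin n) (hkl : k ≠ l) (m' : ℤ),
    (if pos then AffPos k l m' else AffNeg k l m') ∧ ¬(k = i ∧ l = j ∧ m' = m) ∧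
    h = xRoot ι t i j hij m g * xRoot ι t k l hkl m' f * (xRoot ι t i j hij m g)⁻¹}

/-- The root subgroup `U_{β̇} = {x_{β̇}(f) : f ∈ D}`. -/
def UrootSet {n : ℕ} (i j : Fin n) (hij : i ≠ j) (m : ℤ) :
    Set (Matrix (Fin n) (Fin n) A)ˣ :=
  {g | ∃ f : D, g = xRoot ι t i j hij m f}



/-! ### Auxiliary development for Statement 8 -/

section Aux

variable {n : ℕ}

lemma elemUnit_val (i j : Fin n) (hij : i ≠ j) (f : A) :
    (elemUnit i j hij f).val = 1 + Matrix.single i j f := rfl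

lemma elemUnit_inv_val (i j : Fin n) (hij : i ≠ j) (f : A) :
    ((elemUnit i j hij f)⁻¹).val = 1 - Matrix.single i j f := rfl

/-! #### Commutation of powers of `t` with `ι D` -/

lemma t_comm {τ : D ≃+* D} (hA : IsSkewLaurent τ ι t) (b : D) :
    (t : A) * ι b = ι (τ b) * (t : A) := by
  have h := hA.conj_eq b
  calc (t : A) * ι b = ((t : A) * ι b * ((t⁻¹ : Aˣ) : A)) * (t : A) := by
        rw [mul_assoc, Units.inv_mul, mul_one]
    _ = ι (τ b) * (t : A) := by rw [h]

lemma tinv_comm {τ : D ≃+* D} (hA : IsSkewLaurent τ ι t) (b : D) :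
    ((t⁻¹ : Aˣ) : A) * ι b = ι (τ.symm b) * ((t⁻¹ : Aˣ) : A) := by
  have h := hA.conj_eq (τ.symm b)
  rw [RingEquiv.apply_symm_apply] at h
  calc ((t⁻¹ : Aˣ) : A) * ι b
      = ((t⁻¹ : Aˣ) : A) * ((t : A) * ι (τ.symm b) * ((t⁻¹ : Aˣ) : A)) := by rw [h]
    _ = (((t⁻¹ : Aˣ) : A) * (t : A)) * ι (τ.symm b) * ((t⁻¹ : Aˣ) : A) := by
        rw [mul_assoc, mul_assoc, mul_assoc]
    _ = ι (τ.symm b) * ((t⁻¹ : Aˣ) : A) := by rw [Units.inv_mul, one_mul]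

lemma tpow_comm {τ : D ≃+* D} (hA : IsSkewLaurent τ ι t) (k : ℤ) (b : D) :
    ∃ c : D, ((t ^ k : Aˣ) : A) * ι b = ι c * ((t ^ k : Aˣ) : A) := by
  induction k using Int.induction_on generalizing b with
  | zero => exact ⟨b, by simp⟩
  | succ k ih =>
      obtain ⟨c, hc⟩ := ih (τ b)
      refine ⟨c, ?_⟩
      have h : (t ^ ((k : ℤ) + 1) : Aˣ) = t ^ (k : ℤ) * t := by
        rw [_root_.zpow_add_one]
      rw [h, Units.val_mul, mul_assoc, t_comm ι t hA b, ← mul_assoc, hc, mul_assoc]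
  | pred k ih =>
      obtain ⟨c, hc⟩ := ih (τ.symm b)
      refine ⟨c, ?_⟩
      have h : (t ^ (-(k : ℤ) - 1) : Aˣ) = t ^ (-(k : ℤ)) * t⁻¹ := by
        rw [_root_.zpow_sub_one]
      rw [h, Units.val_mul, mul_assoc, tinv_comm ι t hA b, ← mul_assoc, hc, mul_assoc]

lemma tpow_mul_tpow (k l : ℤ) :
    ((t ^ k : Aˣ) : A) * ((t ^ l : Aˣ) : A) = ((t ^ (k + l) : Aˣ) : A) := by
  rw [← Units.val_mul, ← _root_.zpow_add]

/-! #### The filtration subgroups `SD` -/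

/-- For `pos = true`: the left `D`-span of the `t^k`, `k ≥ l`; for `pos = false`:
the left `D`-span of the `t^k`, `k ≤ l`. -/
def SD (pos : Bool) (l : ℤ) : AddSubgroup A :=
  AddSubgroup.closure {x | ∃ (a : D) (k : ℤ),
    (if pos then l ≤ k else k ≤ l) ∧ x = ι a * ((t ^ k : Aˣ) : A)}

lemma mem_SD_of_gen {pos : Bool} {l : ℤ} (a : D) (k : ℤ)
    (h : if pos then l ≤ k else k ≤ l) : ι a * ((t ^ k : Aˣ) : A) ∈ SD ι t pos l :=
  AddSubgroup.subset_closure ⟨a, k, h, rfl⟩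

lemma SD_mono {pos : Bool} {l l' : ℤ} (h : if pos then l ≤ l' else l' ≤ l) :
    SD ι t pos l' ≤ SD ι t pos l := by
  apply AddSubgroup.closure_mono
  rintro x ⟨a, k, hk, rfl⟩
  refine ⟨a, k, ?_, rfl⟩
  cases pos <;> simp only [if_true, Bool.false_eq_true, if_false] at * <;> omega

lemma one_mem_SD (pos : Bool) : (1 : A) ∈ SD ι t pos 0 := by
  have h : (1 : A) = ι 1 * ((t ^ (0 : ℤ) : Aˣ) : A) := by simp
  rw [h]
  exact mem_SD_of_gen ι t 1 0 (by cases pos <;> simp)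

lemma mul_mem_SD {τ : D ≃+* D} (hA : IsSkewLaurent τ ι t) {pos : Bool} {l1 l2 : ℤ}
    {x y : A} (hx : x ∈ SD ι t pos l1) (hy : y ∈ SD ι t pos l2) :
    x * y ∈ SD ι t pos (l1 + l2) := by
  refine AddSubgroup.closure_induction
    (fun x hx => ?_) (by rw [zero_mul]; exact zero_mem _)
    (fun a b _ _ pa pb => by rw [add_mul]; exact add_mem pa pb)
    (fun a _ pa => by rw [neg_mul]; exact neg_mem pa) hx
  obtain ⟨a, k, hk, rfl⟩ := hx
  refine AddSubgroup.closure_induction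
    (fun y hy => ?_) (by rw [mul_zero]; exact zero_mem _)
    (fun c d _ _ pc pd => by rw [mul_add]; exact add_mem pc pd)
    (fun c _ pc => by rw [mul_neg]; exact neg_mem pc) hy
  obtain ⟨b, k', hk', rfl⟩ := hy
  obtain ⟨c, hc⟩ := tpow_comm ι t hA k b
  have h : ι a * ((t ^ k : Aˣ) : A) * (ι b * ((t ^ k' : Aˣ) : A))
      = ι (a * c) * ((t ^ (k + k') : Aˣ) : A) := by
    rw [mul_assoc, ← mul_assoc ((t ^ k : Aˣ) : A), hc, _root_.map_mul,
      ← tpow_mul_tpow t k k']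
    noncomm_ring
  rw [h]
  refine mem_SD_of_gen ι t _ _ ?_
  cases pos <;> simp only [if_true, Bool.false_eq_true, if_false] at hk hk' ⊢ <;> omega

/-- Extraction of a coefficient representation from membership in `SD`. -/
lemma SD_repr {pos : Bool} {l : ℤ} {x : A} (hx : x ∈ SD ι t pos l) :
    ∃ c : ℤ →₀ D, (∀ d, c d ≠ 0 → (if pos then l ≤ d else d ≤ l)) ∧
      x = c.sum fun k a => ι a * ((t ^ k : Aˣ) : A) := by
  have hF : ∀ c : ℤ →₀ D, (c.sum fun k a => ι a * ((t ^ k : Aˣ) : A)) =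
      Finsupp.liftAddHom (M := D) (N := A)
        (fun k => (AddMonoidHom.mulRight ((t ^ k : Aˣ) : A)).comp ι.toAddMonoidHom) c :=
    fun c => rfl
  refine AddSubgroup.closure_induction (fun x hx => ?_) ?_ ?_ ?_ hx
  · obtain ⟨a, k, hk, rfl⟩ := hx
    refine ⟨Finsupp.single k a, fun d hd => ?_, ?_⟩
    · rcases eq_or_ne d k with rfl | hdk
      · exact hk
      · exact absurd (Finsupp.single_eq_of_ne' (Ne.symm hdk)) hd
    · rw [hF, Finsupp.liftAddHom_apply_single]
      rfl
  · exact ⟨0, by simp, by rw [hF 0, map_zero]⟩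
  · rintro x y _ _ ⟨c1, hb1, rfl⟩ ⟨c2, hb2, rfl⟩
    refine ⟨c1 + c2, fun d hd => ?_, by rw [hF c1, hF c2, hF (c1 + c2), map_add]⟩
    rcases eq_or_ne (c1 d) 0 with h1 | h1
    · exact hb2 d (by simpa [Finsupp.add_apply, h1] using hd)
    · exact hb1 d h1
  · rintro x _ ⟨c, hb, rfl⟩
    exact ⟨-c, fun d hd => hb d (by simpa using hd), by rw [hF c, hF (-c), map_neg]⟩

lemma not_mem_SD {τ : D ≃+* D} (hA : IsSkewLaurent τ ι t) {pos : Bool} {l : ℤ}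
    {a : D} {k : ℤ} (ha : a ≠ 0) (h : if pos then k < l else l < k) :
    ι a * ((t ^ k : Aˣ) : A) ∉ SD ι t pos l := by
  intro hmem
  obtain ⟨c, hb, hsum⟩ := SD_repr ι t hmem
  obtain ⟨c₀, _, huniq⟩ := hA.repr_unique (ι a * ((t ^ k : Aˣ) : A))
  have h1 : c = c₀ := huniq c hsum
  have h2 : Finsupp.single k a = c₀ :=
    huniq _ (by
      show ι a * ((t ^ k : Aˣ) : A) = (Finsupp.single k a).sum fun k a => ι a * ((t ^ k : Aˣ) : A)
      rw [Finsupp.sum_single_index (show ι (0 : D) * ((t ^ k : Aˣ) : A) = 0 by simp)])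
  have hc : c = Finsupp.single k a := by rw [h1, ← h2]
  have hcon := hb k (by rw [hc, Finsupp.single_eq_same]; exact ha)
  cases pos <;> simp_all <;> omega

/-! #### Degree levels and the degree condition -/

/-- The required `t`-degree level of the `(i,j)` entry. -/
def lvl (pos : Bool) (i j : Fin n) : ℤ :=
  if pos then (if (j : ℕ) < (i : ℕ) then 1 else 0)
  else (if (i : ℕ) < (j : ℕ) then -1 else 0)

lemma lvl_diag (pos : Bool) (i : Fin n) : lvl pos i i = 0 := by
  cases pos <;> simp [lvl]

lemma lvl_triangle (pos : Bool) (i k j : Fin n) :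
    if pos then lvl pos i j ≤ lvl pos i k + lvl pos k j
    else lvl pos i k + lvl pos k j ≤ lvl pos i j := by
  cases pos <;> simp only [lvl, if_true, Bool.false_eq_true, if_false] <;>
    split_ifs <;> omega

/-- The degree condition on all entries of a matrix. -/
def Qmat (pos : Bool) (M : Matrix (Fin n) (Fin n) A) : Prop :=
  ∀ i j, M i j ∈ SD ι t pos (lvl pos i j)

lemma Qmat_one (pos : Bool) : Qmat ι t pos (1 : Matrix (Fin n) (Fin n) A) := by
  intro i j
  rcases eq_or_ne i j with rfl | hij
  · rw [Matrix.one_apply_eq, lvl_diag]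
    exact one_mem_SD ι t pos
  · rw [Matrix.one_apply_ne hij]
    exact zero_mem _

lemma Qmat_mul {τ : D ≃+* D} (hA : IsSkewLaurent τ ι t) {pos : Bool}
    {M N : Matrix (Fin n) (Fin n) A} (hM : Qmat ι t pos M) (hN : Qmat ι t pos N) :
    Qmat ι t pos (M * N) := by
  intro i j
  rw [Matrix.mul_apply]
  refine AddSubgroup.sum_mem _ fun k _ => ?_
  exact SD_mono ι t (lvl_triangle pos i k j) (mul_mem_SD ι t hA (hM i k) (hN k j))

/-- The "Iwahori" subgroup consisting of units whose matrix and inverse matrix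
satisfy the degree condition. -/
def Iw (τ : D ≃+* D) (hA : IsSkewLaurent τ ι t) (n : ℕ) (pos : Bool) :
    Subgroup (Matrix (Fin n) (Fin n) A)ˣ where
  carrier := {g : (Matrix (Fin n) (Fin n) A)ˣ |
    Qmat ι t pos g.val ∧ Qmat ι t pos (g⁻¹).val}
  one_mem' := ⟨by rw [Units.val_one]; exact Qmat_one ι t pos,
    by rw [_root_.inv_one, Units.val_one]; exact Qmat_one ι t pos⟩
  mul_mem' := fun ha hb => ⟨by rw [Units.val_mul]; exact Qmat_mul ι t hA ha.1 hb.1,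
    by rw [_root_.mul_inv_rev, Units.val_mul]; exact Qmat_mul ι t hA hb.2 ha.2⟩
  inv_mem' := fun ha => ⟨ha.2, by rw [_root_.inv_inv]; exact ha.1⟩

/-! #### The diagonal subgroup -/

/-- The subgroup of diagonal matrices in `GL(n,A)`. -/
def DiagGrp (n : ℕ) : Subgroup (Matrix (Fin n) (Fin n) A)ˣ where
  carrier := {g : (Matrix (Fin n) (Fin n) A)ˣ | ∀ k l, k ≠ l → g.val k l = 0}
  one_mem' := fun k l hkl => by rw [Units.val_one]; exact Matrix.one_apply_ne hkl
  mul_mem' := by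
    intro a b ha hb k l hkl
    rw [Units.val_mul, Matrix.mul_apply]
    refine Finset.sum_eq_zero fun m _ => ?_
    rcases eq_or_ne k m with rfl | hkm
    · rw [hb k l hkl, mul_zero]
    · rw [ha k m hkm, zero_mul]
  inv_mem' := by
    intro g hg k l hkl
    have h1 : ((g⁻¹).val * g.val) k l = (g⁻¹).val k l * g.val l l := by
      rw [Matrix.mul_apply]
      exact Finset.sum_eq_single l (fun m _ hm => by rw [hg m l hm, mul_zero])
        (fun h => absurd (Finset.mem_univ l) h)
    have hXg : (g⁻¹).val k l * g.val l l = 0 := by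
      rw [← h1, ← Units.val_mul, inv_mul_cancel, Units.val_one, Matrix.one_apply_ne hkl]
    have h2 : (g.val * (g⁻¹).val) l l = g.val l l * (g⁻¹).val l l := by
      rw [Matrix.mul_apply]
      exact Finset.sum_eq_single l (fun m _ hm => by rw [hg l m (Ne.symm hm), zero_mul])
        (fun h => absurd (Finset.mem_univ l) h)
    have hGX : g.val l l * (g⁻¹).val l l = 1 := by
      rw [← h2, ← Units.val_mul, mul_inv_cancel, Units.val_one, Matrix.one_apply_eq]
    calc (g⁻¹).val k l = (g⁻¹).val k l * (g.val l l * (g⁻¹).val l l) := by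
          rw [hGX, mul_one]
      _ = ((g⁻¹).val k l * g.val l l) * (g⁻¹).val l l := by rw [mul_assoc]
      _ = 0 := by rw [hXg, zero_mul]

lemma mem_DiagGrp {g : (Matrix (Fin n) (Fin n) A)ˣ} :
    g ∈ DiagGrp (A := A) n ↔ ∀ k l, k ≠ l → g.val k l = 0 := Iff.rfl

/-! #### Matrix identities -/

lemma stdBasis_neg' (a b : Fin n) (x : A) :
    Matrix.single a b (-x) = -Matrix.single a b x := by
  ext a' b'
  by_cases h : a = a' ∧ b = b' <;> simp [Matrix.single, h]

lemma sb_diag_entry (a : Fin n) (x : A) {k l : Fin n} (hkl : k ≠ l) :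
    Matrix.single a a x k l = 0 := by
  apply Matrix.single_apply_of_ne
  rintro ⟨rfl, rfl⟩
  exact hkl rfl

section MatrixIdent

lemma tripleM (i j : Fin n) (hij : i ≠ j) (p q : A) (hpq : p * q = -1) (hqp : q * p = -1) :
    (1 + Matrix.single i j p) * (1 + Matrix.single j i q) *
      (1 + Matrix.single i j p)
      = 1 - Matrix.single i i 1 - Matrix.single j j 1
        + Matrix.single i j p + Matrix.single j i q := by
  have z1 : ∀ x y : A, Matrix.single i j x * Matrix.single i j y = 0 :=
    fun x y => Matrix.single_mul_single_of_ne (h := hij.symm) ..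
  have z2 : ∀ x y : A, Matrix.single j i x * Matrix.single j i y = 0 :=
    fun x y => Matrix.single_mul_single_of_ne (h := hij) ..
  simp only [mul_add, add_mul, mul_one, one_mul, Matrix.single_mul_single_same, z1, z2,
    hpq, hqp, add_zero, zero_add, mul_zero, zero_mul]
  simp only [neg_one_mul, stdBasis_neg']
  abel

lemma monoMul (i j : Fin n) (hij : i ≠ j) (p q p' q' : A) :
    (1 - Matrix.single i i 1 - Matrix.single j j 1
      + Matrix.single i j p + Matrix.single j i q) *
    (1 - Matrix.single i i 1 - Matrix.single j j 1
      + Matrix.single i j p' + Matrix.single j i q')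
    = 1 - Matrix.single i i 1 - Matrix.single j j 1
      + Matrix.single i i (p * q') + Matrix.single j j (q * p') := by
  have z1 : ∀ x y : A, Matrix.single i j x * Matrix.single i j y = 0 :=
    fun x y => Matrix.single_mul_single_of_ne (h := hij.symm) ..
  have z2 : ∀ x y : A, Matrix.single j i x * Matrix.single j i y = 0 :=
    fun x y => Matrix.single_mul_single_of_ne (h := hij) ..
  have z3 : ∀ x y : A, Matrix.single i i x * Matrix.single j j y = 0 :=
    fun x y => Matrix.single_mul_single_of_ne (h := hij) ..
  have z4 : ∀ x y : A, Matrix.single i i x * Matrix.single j i y = 0 :=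
    fun x y => Matrix.single_mul_single_of_ne (h := hij) ..
  have z5 : ∀ x y : A, Matrix.single j j x * Matrix.single i i y = 0 :=
    fun x y => Matrix.single_mul_single_of_ne (h := hij.symm) ..
  have z6 : ∀ x y : A, Matrix.single j j x * Matrix.single i j y = 0 :=
    fun x y => Matrix.single_mul_single_of_ne (h := hij.symm) ..
  have z7 : ∀ x y : A, Matrix.single i j x * Matrix.single i i y = 0 :=
    fun x y => Matrix.single_mul_single_of_ne (h := hij.symm) ..
  have z8 : ∀ x y : A, Matrix.single j i x * Matrix.single j j y = 0 :=
    fun x y => Matrix.single_mul_single_of_ne (h := hij) ..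
  simp only [mul_sub, sub_mul, mul_add, add_mul, mul_one, one_mul,
    Matrix.single_mul_single_same, z1, z2, z3, z4, z5, z6, z7, z8,
    mul_zero, zero_mul, add_zero, zero_add, sub_zero, zero_sub]
  abel

lemma sandwich1 (i j : Fin n) (hij : i ≠ j) (p q c : A) :
    (1 - Matrix.single i i 1 - Matrix.single j j 1
      + Matrix.single i j p + Matrix.single j i q) *
    (1 + Matrix.single i j c) *
    (1 - Matrix.single i i 1 - Matrix.single j j 1
      + Matrix.single i j p + Matrix.single j i q)
    = 1 - Matrix.single i i 1 - Matrix.single j j 1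
      + Matrix.single i i (p * q) + Matrix.single j j (q * p)
      + Matrix.single j i (q * c * q) := by
  have z1 : ∀ x y : A, Matrix.single i j x * Matrix.single i j y = 0 :=
    fun x y => Matrix.single_mul_single_of_ne (h := hij.symm) ..
  have z2 : ∀ x y : A, Matrix.single j i x * Matrix.single j i y = 0 :=
    fun x y => Matrix.single_mul_single_of_ne (h := hij) ..
  have z3 : ∀ x y : A, Matrix.single i i x * Matrix.single j j y = 0 :=
    fun x y => Matrix.single_mul_single_of_ne (h := hij) ..
  have z4 : ∀ x y : A, Matrix.single i i x * Matrix.single j i y = 0 :=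
    fun x y => Matrix.single_mul_single_of_ne (h := hij) ..
  have z5 : ∀ x y : A, Matrix.single j j x * Matrix.single i i y = 0 :=
    fun x y => Matrix.single_mul_single_of_ne (h := hij.symm) ..
  have z6 : ∀ x y : A, Matrix.single j j x * Matrix.single i j y = 0 :=
    fun x y => Matrix.single_mul_single_of_ne (h := hij.symm) ..
  have z7 : ∀ x y : A, Matrix.single i j x * Matrix.single i i y = 0 :=
    fun x y => Matrix.single_mul_single_of_ne (h := hij.symm) ..
  have z8 : ∀ x y : A, Matrix.single j i x * Matrix.single j j y = 0 :=
    fun x y => Matrix.single_mul_single_of_ne (h := hij) ..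
  simp only [mul_sub, sub_mul, mul_add, add_mul, mul_one, one_mul,
    Matrix.single_mul_single_same, z1, z2, z3, z4, z5, z6, z7, z8,
    mul_zero, zero_mul, add_zero, zero_add, sub_zero, zero_sub]
  abel

lemma sandwich2 (i j : Fin n) (hij : i ≠ j) (p q c : A) :
    (1 - Matrix.single i i 1 - Matrix.single j j 1
      + Matrix.single i j p + Matrix.single j i q) *
    (1 + Matrix.single j i c) *
    (1 - Matrix.single i i 1 - Matrix.single j j 1
      + Matrix.single i j p + Matrix.single j i q)
    = 1 - Matrix.single i i 1 - Matrix.single j j 1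
      + Matrix.single i i (p * q) + Matrix.single j j (q * p)
      + Matrix.single i j (p * c * p) := by
  have z1 : ∀ x y : A, Matrix.single i j x * Matrix.single i j y = 0 :=
    fun x y => Matrix.single_mul_single_of_ne (h := hij.symm) ..
  have z2 : ∀ x y : A, Matrix.single j i x * Matrix.single j i y = 0 :=
    fun x y => Matrix.single_mul_single_of_ne (h := hij) ..
  have z3 : ∀ x y : A, Matrix.single i i x * Matrix.single j j y = 0 :=
    fun x y => Matrix.single_mul_single_of_ne (h := hij) ..
  have z4 : ∀ x y : A, Matrix.single i i x * Matrix.single j i y = 0 :=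
    fun x y => Matrix.single_mul_single_of_ne (h := hij) ..
  have z5 : ∀ x y : A, Matrix.single j j x * Matrix.single i i y = 0 :=
    fun x y => Matrix.single_mul_single_of_ne (h := hij.symm) ..
  have z6 : ∀ x y : A, Matrix.single j j x * Matrix.single i j y = 0 :=
    fun x y => Matrix.single_mul_single_of_ne (h := hij.symm) ..
  have z7 : ∀ x y : A, Matrix.single i j x * Matrix.single i i y = 0 :=
    fun x y => Matrix.single_mul_single_of_ne (h := hij.symm) ..
  have z8 : ∀ x y : A, Matrix.single j i x * Matrix.single j j y = 0 :=
    fun x y => Matrix.single_mul_single_of_ne (h := hij) ..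
  simp only [mul_sub, sub_mul, mul_add, add_mul, mul_one, one_mul,
    Matrix.single_mul_single_same, z1, z2, z3, z4, z5, z6, z7, z8,
    mul_zero, zero_mul, add_zero, zero_add, sub_zero, zero_sub]
  abel

lemma entry_ij (i j : Fin n) (hij : i ≠ j) (x y z : A) :
    ((1 - Matrix.single i i 1 - Matrix.single j j 1
      + Matrix.single i i x + Matrix.single j j y
      + Matrix.single i j z : Matrix (Fin n) (Fin n) A)) i j = z := by
  simp [Matrix.sub_apply, Matrix.add_apply, Matrix.one_apply_ne hij,
    sb_diag_entry i _ hij, sb_diag_entry j _ hij, hij]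

lemma entry_ji (i j : Fin n) (hij : i ≠ j) (x y z : A) :
    ((1 - Matrix.single i i 1 - Matrix.single j j 1
      + Matrix.single i i x + Matrix.single j j y
      + Matrix.single j i z : Matrix (Fin n) (Fin n) A)) j i = z := by
  simp [Matrix.sub_apply, Matrix.add_apply, Matrix.one_apply_ne hij.symm,
    sb_diag_entry i _ hij.symm, sb_diag_entry j _ hij.symm, hij.symm]

end MatrixIdent

/-! #### Explicit forms of `wRoot` and `hRoot` -/

lemma xRoot_one_val (i j : Fin n) (hij : i ≠ j) (m : ℤ) :
    (xRoot ι t i j hij m 1).val = 1 + Matrix.single i j ((t ^ m : Aˣ) : A) := by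
  unfold xRoot
  split_ifs <;> simp [elemUnit_val]

lemma wRoot_form (i j : Fin n) (hij : i ≠ j) (m : ℤ) (u : Dˣ) :
    ∃ p q : A, p * q = -1 ∧ q * p = -1 ∧
      (wRoot ι t i j hij m u).val
        = 1 - Matrix.single i i 1 - Matrix.single j j 1
          + Matrix.single i j p + Matrix.single j i q := by
  have hT : ((t ^ m : Aˣ) : A) * ((t ^ (-m) : Aˣ) : A) = 1 := by
    rw [tpow_mul_tpow t]; simp
  have hT' : ((t ^ (-m) : Aˣ) : A) * ((t ^ m : Aˣ) : A) = 1 := by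
    rw [tpow_mul_tpow t]; simp
  have hu : ι ((u : D)) * ι ((↑u⁻¹ : D)) = 1 := by
    rw [← _root_.map_mul, Units.mul_inv, map_one]
  have hu' : ι ((↑u⁻¹ : D)) * ι ((u : D)) = 1 := by
    rw [← _root_.map_mul, Units.inv_mul, map_one]
  rcases hij.lt_or_gt with h | h
  · have h1 : ι (u : D) * ((t ^ m : Aˣ) : A) * (((t ^ (-m) : Aˣ) : A) * ι ((↑u⁻¹ : D))) = 1 := by
      rw [← mul_assoc, mul_assoc (ι (u : D)), hT, mul_one, hu]
    have h2 : ((t ^ (-m) : Aˣ) : A) * ι ((↑u⁻¹ : D)) * (ι (u : D) * ((t ^ m : Aˣ) : A)) = 1 := by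
      rw [← mul_assoc, mul_assoc (((t ^ (-m) : Aˣ) : A)), hu', mul_one, hT']
    have hpq : ι (u : D) * ((t ^ m : Aˣ) : A) * (((t ^ (-m) : Aˣ) : A) * ι (-(↑u⁻¹ : D))) = -1 := by
      rw [map_neg, mul_neg, mul_neg, h1]
    have hqp : ((t ^ (-m) : Aˣ) : A) * ι (-(↑u⁻¹ : D)) * (ι (u : D) * ((t ^ m : Aˣ) : A)) = -1 := by
      rw [map_neg, mul_neg, neg_mul, h2]
    refine ⟨_, _, hpq, hqp, ?_⟩
    unfold wRoot xRoot
    rw [if_pos h, if_neg (asymm h), Units.val_mul, Units.val_mul]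
    exact tripleM i j hij _ _ hpq hqp
  · have h1 : ((t ^ m : Aˣ) : A) * ι (u : D) * (ι ((↑u⁻¹ : D)) * ((t ^ (-m) : Aˣ) : A)) = 1 := by
      rw [← mul_assoc, mul_assoc (((t ^ m : Aˣ) : A)), hu, mul_one, hT]
    have h2 : ι ((↑u⁻¹ : D)) * ((t ^ (-m) : Aˣ) : A) * (((t ^ m : Aˣ) : A) * ι (u : D)) = 1 := by
      rw [← mul_assoc, mul_assoc (ι ((↑u⁻¹ : D))), hT', mul_one, hu']
    have hpq : ((t ^ m : Aˣ) : A) * ι (u : D) * (ι (-(↑u⁻¹ : D)) * ((t ^ (-m) : Aˣ) : A)) = -1 := by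
      rw [map_neg, neg_mul, mul_neg, h1]
    have hqp : ι (-(↑u⁻¹ : D)) * ((t ^ (-m) : Aˣ) : A) * (((t ^ m : Aˣ) : A) * ι (u : D)) = -1 := by
      rw [map_neg, neg_mul, neg_mul, h2]
    refine ⟨_, _, hpq, hqp, ?_⟩
    unfold wRoot xRoot
    rw [if_neg (asymm h), if_pos h, Units.val_mul, Units.val_mul]
    exact tripleM i j hij _ _ hpq hqp

lemma wRoot_one_val (i j : Fin n) (hij : i ≠ j) (m : ℤ) :
    (wRoot ι t i j hij m 1).val
      = 1 - Matrix.single i i 1 - Matrix.single j j 1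
        + Matrix.single i j ((t ^ m : Aˣ) : A)
        + Matrix.single j i (-((t ^ (-m) : Aˣ) : A)) := by
  have hT : ((t ^ m : Aˣ) : A) * ((t ^ (-m) : Aˣ) : A) = 1 := by
    rw [tpow_mul_tpow t]; simp
  have hT' : ((t ^ (-m) : Aˣ) : A) * ((t ^ m : Aˣ) : A) = 1 := by
    rw [tpow_mul_tpow t]; simp
  have hpq : ((t ^ m : Aˣ) : A) * -((t ^ (-m) : Aˣ) : A) = -1 := by rw [mul_neg, hT]
  have hqp : -((t ^ (-m) : Aˣ) : A) * ((t ^ m : Aˣ) : A) = -1 := by rw [neg_mul, hT']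
  rcases hij.lt_or_gt with h | h
  · unfold wRoot xRoot
    rw [if_pos h, if_neg (asymm h)]
    have e1 : ι ((1 : Dˣ) : D) * ((t ^ m : Aˣ) : A) = ((t ^ m : Aˣ) : A) := by simp
    have e2 : ((t ^ (-m) : Aˣ) : A) * ι (-((1⁻¹ : Dˣ) : D)) = -((t ^ (-m) : Aˣ) : A) := by
      simp
    rw [e1, e2, Units.val_mul, Units.val_mul]
    exact tripleM i j hij _ _ hpq hqp
  · unfold wRoot xRoot
    rw [if_neg (asymm h), if_pos h]
    have e1 : ((t ^ m : Aˣ) : A) * ι ((1 : Dˣ) : D) = ((t ^ m : Aˣ) : A) := by simp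
    have e2 : ι (-((1⁻¹ : Dˣ) : D)) * ((t ^ (-m) : Aˣ) : A) = -((t ^ (-m) : Aˣ) : A) := by
      simp
    rw [e1, e2, Units.val_mul, Units.val_mul]
    exact tripleM i j hij _ _ hpq hqp

lemma hRoot_offdiag (i j : Fin n) (hij : i ≠ j) (m : ℤ) (u : Dˣ)
    {k l : Fin n} (hkl : k ≠ l) : (hRoot ι t i j hij m u).val k l = 0 := by
  obtain ⟨p, q, _, _, hw⟩ := wRoot_form ι t i j hij m u
  obtain ⟨p', q', _, _, hw'⟩ := wRoot_form ι t i j hij 0 (-1)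
  rw [hRoot, Units.val_mul, hw, hw', monoMul i j hij]
  simp [Matrix.sub_apply, Matrix.add_apply, Matrix.one_apply_ne hkl,
    sb_diag_entry i _ hkl, sb_diag_entry j _ hkl]

lemma Tgrp_le_Diag : Tgrp ι t n ≤ DiagGrp (A := A) n := by
  rw [Tgrp, Subgroup.closure_le]
  rintro g ⟨i, j, hij, m, u, rfl⟩
  intro k l hkl
  exact hRoot_offdiag ι t i j hij m u hkl

/-! #### `B^± ≤ Iw^±` -/

lemma Qmat_elem {pos : Bool} {i j : Fin n} (hij : i ≠ j) {e : A}
    (he : e ∈ SD ι t pos (lvl pos i j)) :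
    Qmat ι t pos (1 + Matrix.single i j e) := by
  intro k l
  rcases eq_or_ne k l with rfl | hkl
  · rw [Matrix.add_apply, Matrix.one_apply_eq, lvl_diag]
    have h : Matrix.single i j e k k = 0 := by
      apply Matrix.single_apply_of_ne
      rintro ⟨rfl, rfl⟩
      exact hij rfl
    rw [h, add_zero]
    exact one_mem_SD ι t pos
  · rw [Matrix.add_apply, Matrix.one_apply_ne hkl, zero_add]
    by_cases hk : i = k ∧ j = l
    · obtain ⟨rfl, rfl⟩ := hk
      rw [Matrix.single_apply_same]
      exact he
    · rw [Matrix.single_apply_of_ne i j e k l hk]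
      exact zero_mem _

lemma xRoot_entry {τ : D ≃+* D} (hA : IsSkewLaurent τ ι t) {pos : Bool}
    {i j : Fin n} (hij : i ≠ j) {m : ℤ} (f : D)
    (hcond : if pos then AffPos i j m else AffNeg i j m) :
    ∃ e ∈ SD ι t pos (lvl pos i j),
      (xRoot ι t i j hij m f).val = 1 + Matrix.single i j e ∧
      ((xRoot ι t i j hij m f)⁻¹).val = 1 - Matrix.single i j e := by
  rcases hij.lt_or_gt with h | h
  · have hnat : (i : ℕ) < (j : ℕ) := Fin.lt_def.mp h
    have hni : ¬ j < i := asymm h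
    have hb : if pos then lvl pos i j ≤ m else m ≤ lvl pos i j := by
      cases pos <;>
        simp only [if_true, Bool.false_eq_true, if_false] at hcond ⊢ <;>
        [rcases hcond with ⟨h1, h2⟩ | ⟨h1, h2⟩; rcases hcond with ⟨h1, h2⟩ | ⟨h1, h2⟩] <;>
        first
          | (exact absurd h1 hni)
          | (simp only [lvl, if_pos hnat, if_neg (by omega : ¬ (j : ℕ) < (i : ℕ))] <;> omega)
    refine ⟨ι f * ((t ^ m : Aˣ) : A), mem_SD_of_gen ι t f m hb, ?_, ?_⟩
    · unfold xRoot
      rw [if_pos h]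
      rfl
    · unfold xRoot
      rw [if_pos h]
      rfl
  · have hnat : (j : ℕ) < (i : ℕ) := Fin.lt_def.mp h
    have hni : ¬ i < j := asymm h
    obtain ⟨c, hc⟩ := tpow_comm ι t hA m f
    have hb : if pos then lvl pos i j ≤ m else m ≤ lvl pos i j := by
      cases pos <;>
        simp only [if_true, Bool.false_eq_true, if_false] at hcond ⊢ <;>
        [rcases hcond with ⟨h1, h2⟩ | ⟨h1, h2⟩; rcases hcond with ⟨h1, h2⟩ | ⟨h1, h2⟩] <;>
        first
          | (exact absurd h1 hni)
          | (simp only [lvl, if_pos hnat, if_neg (by omega : ¬ (i : ℕ) < (j : ℕ))] <;> omega)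
    refine ⟨((t ^ m : Aˣ) : A) * ι f, ?_, ?_, ?_⟩
    · rw [hc]
      exact mem_SD_of_gen ι t c m hb
    · unfold xRoot
      rw [if_neg (asymm h)]
      rfl
    · unfold xRoot
      rw [if_neg (asymm h)]
      rfl

lemma Bgrp_le_Iw {τ : D ≃+* D} (hA : IsSkewLaurent τ ι t) (n : ℕ) (pos : Bool) :
    Bgrp ι t n pos ≤ Iw ι t τ hA n pos := by
  rw [Bgrp]
  apply sup_le
  · rw [Ugrp, Subgroup.closure_le]
    rintro g ⟨i, j, hij, m, f, hcond, rfl⟩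
    obtain ⟨e, he, hval, hinv⟩ := xRoot_entry ι t hA hij f hcond
    refine ⟨by rw [hval]; exact Qmat_elem ι t hij he, ?_⟩
    rw [hinv, sub_eq_add_neg, ← stdBasis_neg']
    exact Qmat_elem ι t hij (neg_mem he)
  · rw [T0grp, Subgroup.closure_le]
    rintro g ⟨hT, hdiag⟩
    have hD : g ∈ DiagGrp (A := A) n := Tgrp_le_Diag ι t hT
    have hD' : g⁻¹ ∈ DiagGrp (A := A) n := inv_mem hD
    have hgd : ∀ k l, k ≠ l → g.val k l = 0 := mem_DiagGrp.mp hD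
    have hgd' : ∀ k l, k ≠ l → (g⁻¹).val k l = 0 := mem_DiagGrp.mp hD'
    constructor
    · intro k l
      rcases eq_or_ne k l with rfl | hkl
      · obtain ⟨s, hs, hval⟩ := hdiag k
        rw [hval, lvl_diag]
        have h : ι s = ι s * ((t ^ (0 : ℤ) : Aˣ) : A) := by simp
        rw [h]
        exact mem_SD_of_gen ι t s 0 (by cases pos <;> simp)
      · rw [hgd k l hkl]
        exact zero_mem _
    · intro k l
      rcases eq_or_ne k l with rfl | hkl
      · obtain ⟨s, hs, hval⟩ := hdiag k
        have h2 : (g.val * (g⁻¹).val) k k = g.val k k * (g⁻¹).val k k := by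
          rw [Matrix.mul_apply]
          exact Finset.sum_eq_single k (fun m _ hm => by rw [hgd k m (Ne.symm hm), zero_mul])
            (fun hh => absurd (Finset.mem_univ k) hh)
        have hGX : g.val k k * (g⁻¹).val k k = 1 := by
          rw [← h2, ← Units.val_mul, mul_inv_cancel, Units.val_one, Matrix.one_apply_eq]
        have hss : ι s * ι s⁻¹ = 1 := by
          rw [← _root_.map_mul, mul_inv_cancel₀ hs, map_one]
        have hXval : (g⁻¹).val k k = ι s⁻¹ := by
          have h3 : ((g⁻¹).val * g.val) k k = (g⁻¹).val k k * g.val k k := by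
            rw [Matrix.mul_apply]
            exact Finset.sum_eq_single k
              (fun m _ hm => by rw [hgd m k hm, mul_zero])
              (fun hh => absurd (Finset.mem_univ k) hh)
          have hXG : (g⁻¹).val k k * g.val k k = 1 := by
            rw [← h3, ← Units.val_mul, inv_mul_cancel, Units.val_one, Matrix.one_apply_eq]
          calc (g⁻¹).val k k = (g⁻¹).val k k * (ι s * ι s⁻¹) := by rw [hss, mul_one]
            _ = ((g⁻¹).val k k * ι s) * ι s⁻¹ := by rw [mul_assoc]
            _ = ((g⁻¹).val k k * g.val k k) * ι s⁻¹ := by rw [hval]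
            _ = ι s⁻¹ := by rw [hXG, one_mul]
        rw [hXval, lvl_diag]
        have h : ι s⁻¹ = ι s⁻¹ * ((t ^ (0 : ℤ) : Aˣ) : A) := by simp
        rw [h]
        exact mem_SD_of_gen ι t s⁻¹ 0 (by cases pos <;> simp)
      · rw [hgd' k l hkl]
        exact zero_mem _

end Aux


/-- (Axiom T2.) For every `α̇ ∈ Π_a` there is `b ∈ B^±` with
`w_{α̇}(1)·b·w_{α̇}(1) ∉ B^±`. -/
theorem statement_8 (n : ℕ) (hn : 2 ≤ n) {D A : Type} [DivisionRing D] [Ring A]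
    (τ : D ≃+* D) (ι : D →+* A) (t : Aˣ) (hA : IsSkewLaurent τ ι t)
    (i j : Fin n) (hij : i ≠ j) (m : ℤ) (hα : SimpleAff n i j m) (pos : Bool) :
    ∃ b ∈ Bgrp ι t n pos,
      wRoot ι t i j hij m 1 * b * wRoot ι t i j hij m 1 ∉ Bgrp ι t n pos := by
  have hT : ((t ^ m : Aˣ) : A) * ((t ^ (-m) : Aˣ) : A) = 1 := by
    rw [tpow_mul_tpow t]; simp
  have hT' : ((t ^ (-m) : Aˣ) : A) * ((t ^ m : Aˣ) : A) = 1 := by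
    rw [tpow_mul_tpow t]; simp
  cases pos with
  | true =>
    refine ⟨xRoot ι t i j hij m 1, ?_, ?_⟩
    · show xRoot ι t i j hij m 1 ∈ Ugrp ι t n true ⊔ T0grp ι t n
      apply Subgroup.mem_sup_left
      apply Subgroup.subset_closure
      refine ⟨i, j, hij, m, 1, ?_, rfl⟩
      show AffPos i j m
      rcases hα with ⟨h1, h2⟩ | ⟨h1, h2, h3⟩
      · exact Or.inl ⟨Fin.lt_def.mpr (by omega), by omega⟩
      · exact Or.inr ⟨Fin.lt_def.mpr (by omega), by omega⟩
    · intro hmem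
      have hIw := Bgrp_le_Iw ι t hA n true hmem
      have hQ := hIw.1 j i
      rw [Units.val_mul, Units.val_mul, wRoot_one_val ι t i j hij m,
        xRoot_one_val ι t i j hij m, sandwich1 i j hij, entry_ji i j hij] at hQ
      have hval : (-((t ^ (-m) : Aˣ) : A)) * ((t ^ m : Aˣ) : A) * (-((t ^ (-m) : Aˣ) : A))
          = ι (1 : D) * ((t ^ (-m) : Aˣ) : A) := by
        rw [neg_mul, hT', neg_one_mul, neg_neg, map_one, one_mul]
      rw [hval] at hQ
      have hb : -m < lvl true j i := by
        show -m < (if (i : ℕ) < (j : ℕ) then (1 : ℤ) else 0)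
        rcases hα with ⟨h1, h2⟩ | ⟨h1, h2, h3⟩ <;> split_ifs <;> omega
      exact not_mem_SD ι t hA one_ne_zero
        (show (if true then -m < lvl true j i else lvl true j i < -m) from hb) hQ
  | false =>
    refine ⟨xRoot ι t j i hij.symm (-m) 1, ?_, ?_⟩
    · show xRoot ι t j i hij.symm (-m) 1 ∈ Ugrp ι t n false ⊔ T0grp ι t n
      apply Subgroup.mem_sup_left
      apply Subgroup.subset_closure
      refine ⟨j, i, hij.symm, -m, 1, ?_, rfl⟩
      show AffNeg j i (-m)
      rcases hα with ⟨h1, h2⟩ | ⟨h1, h2, h3⟩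
      · exact Or.inr ⟨Fin.lt_def.mpr (by omega), by omega⟩
      · exact Or.inl ⟨Fin.lt_def.mpr (by omega), by omega⟩
    · intro hmem
      have hIw := Bgrp_le_Iw ι t hA n false hmem
      have hQ := hIw.1 i j
      rw [Units.val_mul, Units.val_mul, wRoot_one_val ι t i j hij m,
        xRoot_one_val ι t j i hij.symm (-m), sandwich2 i j hij, entry_ij i j hij] at hQ
      have hval : ((t ^ m : Aˣ) : A) * ((t ^ (-m) : Aˣ) : A) * ((t ^ m : Aˣ) : A)
          = ι (1 : D) * ((t ^ m : Aˣ) : A) := by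
        rw [hT, one_mul, map_one, one_mul]
      rw [hval] at hQ
      have hb : lvl false i j < m := by
        show (if (i : ℕ) < (j : ℕ) then (-1 : ℤ) else 0) < m
        rcases hα with ⟨h1, h2⟩ | ⟨h1, h2, h3⟩ <;> split_ifs <;> omega
      exact not_mem_SD ι t hA one_ne_zero
        (show (if false then m < lvl false i j else lvl false i j < m) from hb) hQ

end NCLaurent
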